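/- Let 0 < λ_0 < λ_1 < ⋯ < λ_k → ∞ be a strictly increasing sequence of reals with counting function N(u) = #{k ≥ 0 : λ_k ≤ u}, and suppose Σ_k e^{−sλ_k} < ∞ for every s > 0. Then for every s > 0, the generating function identity Σ_{f} e^{−s Σ_k f(k)λ_k} = exp( s ∫_0^∞ N(u)/(e^{su} − 1) du ) holds, where the sum on the left runs over all finitely supported functions f : ℕ → ℕ. -/

import Mathlib

open Filter Asymptotics Real
open Filter Set Topology MeasureTheory
open scoped ENNReal NNReal

lemma stmt11_geom_tsum (y : ℕ → ℝ≥0∞) (S : Finset ℕ) :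
    ∑' (f : {f : ℕ →₀ ℕ // ↑f.support ⊆ (S : Set ℕ)}), ∏ k ∈ S, y k ^ ((f : ℕ →₀ ℕ) k)
      = ∏ k ∈ S, (1 - y k)⁻¹ := by
  classical
  induction S using Finset.induction_on with
  | empty =>
      haveI : Unique {f : ℕ →₀ ℕ // ↑f.support ⊆ ((∅ : Finset ℕ) : Set ℕ)} :=
        { default := ⟨0, by simp⟩
          uniq := fun f => Subtype.ext (by
            have hf := f.2
            simp only [Finset.coe_empty, Set.subset_empty_iff, Finset.coe_eq_empty,
              Finsupp.support_eq_empty] at hf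
            exact hf) }
      rw [tsum_eq_single default (fun b hb => absurd (Subsingleton.elim b default) hb)]
      simp
  | @insert a S ha ih =>
      set e : ℕ × {f : ℕ →₀ ℕ // ↑f.support ⊆ (S : Set ℕ)} ≃
          {f : ℕ →₀ ℕ // ↑f.support ⊆ ((insert a S : Finset ℕ) : Set ℕ)} :=
        { toFun := fun p => ⟨p.2.1 + Finsupp.single a p.1, by
            refine Finset.coe_subset.mpr ?_
            refine Finsupp.support_add.trans (Finset.union_subset ?_ ?_)
            · exact (Finset.coe_subset.mp p.2.2).trans (Finset.subset_insert a S)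
            · exact Finsupp.support_single_subset.trans (by simp)⟩
          invFun := fun f => (f.1 a, ⟨f.1.erase a, by
            intro k hk
            rw [Finset.mem_coe, Finsupp.support_erase, Finset.mem_erase] at hk
            have h2 := f.2 (Finset.mem_coe.mpr hk.2)
            rw [Finset.mem_coe, Finset.mem_insert] at h2
            exact h2.resolve_left hk.1⟩)
          left_inv := fun p => by
            have hg0 : p.2.1 a = 0 :=
              Finsupp.notMem_support_iff.mp (fun hmem => ha (p.2.2 hmem))
            refine Prod.ext ?_ (Subtype.ext ?_)
            · simp [hg0]
            · ext k
              by_cases hka : k = a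
              · subst hka; simp [Finsupp.erase_same, hg0]
              · simp [Finsupp.erase_ne hka, Finsupp.single_eq_of_ne' (Ne.symm hka)]
          right_inv := fun f => Subtype.ext (by
            simp only []
            exact Finsupp.erase_add_single a f.1) }
      calc ∑' (f : {f : ℕ →₀ ℕ // ↑f.support ⊆ ((insert a S : Finset ℕ) : Set ℕ)}),
              ∏ k ∈ insert a S, y k ^ ((f : ℕ →₀ ℕ) k)
          = ∑' (p : ℕ × {f : ℕ →₀ ℕ // ↑f.support ⊆ (S : Set ℕ)}),
              ∏ k ∈ insert a S, y k ^ (((e p) : ℕ →₀ ℕ) k) := (e.tsum_eq _).symm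
        _ = ∑' (p : ℕ × {f : ℕ →₀ ℕ // ↑f.support ⊆ (S : Set ℕ)}),
              y a ^ p.1 * ∏ k ∈ S, y k ^ (p.2.1 k) := by
            refine tsum_congr fun p => ?_
            have hg0 : p.2.1 a = 0 :=
              Finsupp.notMem_support_iff.mp (fun hmem => ha (p.2.2 hmem))
            rw [Finset.prod_insert ha]
            congr 1
            · have : ((e p) : ℕ →₀ ℕ) a = p.1 := by
                simp [e, hg0]
              rw [this]
            · refine Finset.prod_congr rfl fun k hk => ?_
              have hka : k ≠ a := fun h => ha (h ▸ hk)
              have : ((e p) : ℕ →₀ ℕ) k = p.2.1 k := by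
                simp [e, Finsupp.single_eq_of_ne' (Ne.symm hka)]
              rw [this]
        _ = (∑' n : ℕ, y a ^ n) *
              ∑' (g : {f : ℕ →₀ ℕ // ↑f.support ⊆ (S : Set ℕ)}), ∏ k ∈ S, y k ^ (g.1 k) := by
            rw [ENNReal.tsum_prod']
            simp_rw [ENNReal.tsum_mul_left]
            rw [ENNReal.tsum_mul_right]
        _ = (1 - y a)⁻¹ * ∏ k ∈ S, (1 - y k)⁻¹ := by rw [ENNReal.tsum_geometric, ih]
        _ = ∏ k ∈ insert a S, (1 - y k)⁻¹ := by rw [Finset.prod_insert ha]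

open MeasureTheory in
lemma stmt11_integral {s a : ℝ} (hs : 0 < s) (ha : 0 < a) :
    IntegrableOn (fun u => s / (Real.exp (s*u) - 1)) (Set.Ioi a) ∧
    ∫ u in Set.Ioi a, s / (Real.exp (s*u) - 1)
      = -Real.log (1 - Real.exp (-(s*a))) := by
  have hd : ∀ u ∈ Set.Ici a, HasDerivAt (fun v => Real.log (1 - Real.exp (-(s*v))))
      (s / (Real.exp (s*u) - 1)) u := by
    intro u hu
    have hupos : 0 < u := lt_of_lt_of_le ha hu
    have h1 : HasDerivAt (fun v : ℝ => -(s*v)) (-s) u := by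
      simpa using ((hasDerivAt_id u).const_mul s).fun_neg
    have h2 := h1.exp
    have h3 : HasDerivAt (fun v => 1 - Real.exp (-(s*v))) (s * Real.exp (-(s*u))) u := by
      have := h2.const_sub 1
      refine this.congr_deriv ?_
      ring
    have hlt1 : Real.exp (-(s*u)) < 1 := by
      rw [← Real.exp_zero]; exact Real.exp_lt_exp.mpr (by nlinarith)
    have hne : 1 - Real.exp (-(s*u)) ≠ 0 := ne_of_gt (by linarith)
    have h4 := h3.log hne
    convert h4 using 1
    have hgt1 : 1 < Real.exp (s*u) := by
      rw [← Real.exp_zero]; exact Real.exp_lt_exp.mpr (by nlinarith)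
    have h5 : Real.exp (s*u) ≠ 0 := (Real.exp_pos _).ne'
    have h6 : Real.exp (s*u) - 1 ≠ 0 := ne_of_gt (by linarith)
    rw [Real.exp_neg]
    field_simp
  have hw0 : ∀ u ∈ Set.Ioi a, 0 ≤ s / (Real.exp (s*u) - 1) := by
    intro u hu
    rw [Set.mem_Ioi] at hu
    have hgt1 : 1 < Real.exp (s*u) := by
      rw [← Real.exp_zero]; exact Real.exp_lt_exp.mpr (by nlinarith)
    exact div_nonneg hs.le (by linarith)
  have htend : Tendsto (fun v => Real.log (1 - Real.exp (-(s*v)))) atTop (𝓝 0) := by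
    have h1 : Tendsto (fun v : ℝ => -(s*v)) atTop atBot := by
      apply tendsto_neg_atTop_atBot.comp
      exact Tendsto.const_mul_atTop hs tendsto_id
    have h2 : Tendsto (fun v : ℝ => Real.exp (-(s*v))) atTop (𝓝 0) :=
      Real.tendsto_exp_atBot.comp h1
    have h3 : Tendsto (fun v : ℝ => 1 - Real.exp (-(s*v))) atTop (𝓝 1) := by
      simpa using tendsto_const_nhds.sub h2
    have h4 := ((Real.continuousAt_log one_ne_zero).tendsto).comp h3
    simpa [Function.comp_def] using h4
  refine ⟨integrableOn_Ioi_deriv_of_nonneg' hd hw0 htend, ?_⟩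
  rw [integral_Ioi_of_hasDerivAt_of_nonneg' hd hw0 htend, zero_sub]

lemma stmt11_main (x : ℕ → ℝ) (hx0 : ∀ k, 0 < x k) (hlt : ∀ k, x k < 1)
    (hLsum : Summable fun k => -Real.log (1 - x k)) :
    (∑' f : ℕ →₀ ℕ, ∏ k ∈ f.support, (ENNReal.ofReal (x k)) ^ f k)
      = ENNReal.ofReal (Real.exp (∑' k, -Real.log (1 - x k))) := by
  classical
  have h1mx : ∀ k, 0 < 1 - x k := fun k => by linarith [hlt k]
  have hL0 : ∀ k, 0 ≤ -Real.log (1 - x k) := by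
    intro k
    have := Real.log_nonpos (x := 1 - x k) (by linarith [hlt k]) (by linarith [hx0 k])
    linarith
  have hP : ∀ S : Finset ℕ, ∏ k ∈ S, (1 - ENNReal.ofReal (x k))⁻¹
      = ENNReal.ofReal (Real.exp (∑ k ∈ S, -Real.log (1 - x k))) := by
    intro S
    rw [Real.exp_sum, ENNReal.ofReal_prod_of_nonneg (fun i _ => (Real.exp_pos _).le)]
    refine Finset.prod_congr rfl fun k _ => ?_
    have e1 : Real.exp (-Real.log (1 - x k)) = (1 - x k)⁻¹ := by
      rw [Real.exp_neg, Real.exp_log (h1mx k)]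
    rw [e1, ENNReal.ofReal_inv_of_pos (h1mx k), ENNReal.ofReal_sub 1 (hx0 k).le,
      ENNReal.ofReal_one]
  have hA : ∀ S : Finset ℕ,
      (∑' (f : {f : ℕ →₀ ℕ // ↑f.support ⊆ (S : Set ℕ)}),
        ∏ k ∈ (f : ℕ →₀ ℕ).support, (ENNReal.ofReal (x k)) ^ (f : ℕ →₀ ℕ) k)
      = ENNReal.ofReal (Real.exp (∑ k ∈ S, -Real.log (1 - x k))) := by
    intro S
    rw [← hP S, ← stmt11_geom_tsum (fun k => ENNReal.ofReal (x k)) S]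
    refine tsum_congr fun f => ?_
    exact Finset.prod_subset (Finset.coe_subset.mp f.2) (fun k _ hk => by
      rw [Finsupp.notMem_support_iff.mp hk, pow_zero])
  refine le_antisymm ?_ ?_
  · rw [ENNReal.tsum_eq_iSup_sum]
    refine iSup_le fun T => ?_
    set S := T.sup Finsupp.support with hS
    calc (∑ f ∈ T, ∏ k ∈ f.support, (ENNReal.ofReal (x k)) ^ f k)
        = ∑ f ∈ T, Set.indicator {g : ℕ →₀ ℕ | ↑g.support ⊆ (S : Set ℕ)}
            (fun g => ∏ k ∈ g.support, (ENNReal.ofReal (x k)) ^ g k) f := by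
          refine Finset.sum_congr rfl fun f hf => ?_
          rw [Set.indicator_of_mem]
          exact Finset.coe_subset.mpr (Finset.le_sup hf)
      _ ≤ ∑' f : ℕ →₀ ℕ, Set.indicator {g : ℕ →₀ ℕ | ↑g.support ⊆ (S : Set ℕ)}
            (fun g => ∏ k ∈ g.support, (ENNReal.ofReal (x k)) ^ g k) f :=
          ENNReal.sum_le_tsum T
      _ = ∑' (f : {g : ℕ →₀ ℕ // ↑g.support ⊆ (S : Set ℕ)}),
            ∏ k ∈ (f : ℕ →₀ ℕ).support, (ENNReal.ofReal (x k)) ^ (f : ℕ →₀ ℕ) k :=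
          (tsum_subtype _ _).symm
      _ = ENNReal.ofReal (Real.exp (∑ k ∈ S, -Real.log (1 - x k))) := hA S
      _ ≤ ENNReal.ofReal (Real.exp (∑' k, -Real.log (1 - x k))) := by
          apply ENNReal.ofReal_le_ofReal
          exact Real.exp_le_exp.mpr (Summable.sum_le_tsum S (fun k _ => hL0 k) hLsum)
  · have hmonoP : Monotone (fun S : Finset ℕ =>
        ENNReal.ofReal (Real.exp (∑ k ∈ S, -Real.log (1 - x k)))) := by
      intro S S' hss
      apply ENNReal.ofReal_le_ofReal
      exact Real.exp_le_exp.mpr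
        (Finset.sum_le_sum_of_subset_of_nonneg hss (fun k _ _ => hL0 k))
    have htendP : Tendsto (fun S : Finset ℕ =>
        ENNReal.ofReal (Real.exp (∑ k ∈ S, -Real.log (1 - x k)))) atTop
        (𝓝 (ENNReal.ofReal (Real.exp (∑' k, -Real.log (1 - x k))))) :=
      (ENNReal.continuous_ofReal.tendsto _).comp
        ((Real.continuous_exp.tendsto _).comp hLsum.hasSum)
    rw [← iSup_eq_of_tendsto hmonoP htendP]
    refine iSup_le fun S => ?_
    rw [← hA S]
    exact ENNReal.tsum_comp_le_tsum_of_injective Subtype.coe_injective _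

theorem stmt11 (lam : ℕ → ℝ) (hpos : 0 < lam 0) (hmono : StrictMono lam)
    (htop : Tendsto lam atTop atTop)
    (N : ℝ → ℝ) (hN : ∀ u, N u = (Nat.card {k : ℕ | lam k ≤ u} : ℝ))
    (hsum : ∀ s : ℝ, 0 < s → Summable fun k : ℕ => Real.exp (-s * lam k)) :
    ∀ s : ℝ, 0 < s →
      (∑' f : ℕ →₀ ℕ, Real.exp (-s * (f.sum fun k n => (n : ℝ) * lam k)))
        = Real.exp (s * ∫ u in Set.Ioi (0:ℝ), N u / (Real.exp (s * u) - 1)) := by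
  intro s hs
  classical
  have hlampos : ∀ k, 0 < lam k := fun k => lt_of_lt_of_le hpos (hmono.monotone (Nat.zero_le k))
  have hx0 : ∀ k, 0 < Real.exp (-(s * lam k)) := fun k => Real.exp_pos _
  have hxlt : ∀ k, Real.exp (-(s * lam k)) < 1 := fun k => by
    rw [← Real.exp_zero]
    exact Real.exp_lt_exp.mpr (by nlinarith [hlampos k])
  have h1mx : ∀ k, 0 < 1 - Real.exp (-(s * lam k)) := fun k => by linarith [hxlt k]
  have hxsum : Summable (fun k => Real.exp (-(s * lam k))) := by
    simpa [neg_mul] using hsum s hs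
  have hxle : ∀ k, Real.exp (-(s * lam k)) ≤ Real.exp (-(s * lam 0)) := fun k =>
    Real.exp_le_exp.mpr (by nlinarith [hmono.monotone (Nat.zero_le k)])
  have hL0 : ∀ k, 0 ≤ -Real.log (1 - Real.exp (-(s * lam k))) := by
    intro k
    have := Real.log_nonpos (x := 1 - Real.exp (-(s * lam k)))
      (by linarith [hxlt k]) (by linarith [hx0 k])
    linarith
  have hLsum : Summable (fun k => -Real.log (1 - Real.exp (-(s * lam k)))) := by
    refine Summable.of_nonneg_of_le hL0 (fun k => ?_)
      (hxsum.mul_right ((1 - Real.exp (-(s * lam 0)))⁻¹))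
    have t1 : -Real.log (1 - Real.exp (-(s * lam k)))
        = Real.log (1 - Real.exp (-(s * lam k)))⁻¹ := (Real.log_inv _).symm
    have t2 : Real.log (1 - Real.exp (-(s * lam k)))⁻¹
        ≤ (1 - Real.exp (-(s * lam k)))⁻¹ - 1 :=
      Real.log_le_sub_one_of_pos (inv_pos.2 (h1mx k))
    have t3 : (1 - Real.exp (-(s * lam k)))⁻¹ - 1
        = Real.exp (-(s * lam k)) * (1 - Real.exp (-(s * lam k)))⁻¹ := by
      have hne := (h1mx k).ne'
      field_simp
      ring
    have t4 : (1 - Real.exp (-(s * lam k)))⁻¹ ≤ (1 - Real.exp (-(s * lam 0)))⁻¹ := by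
      apply inv_anti₀ (h1mx 0)
      linarith [hxle k]
    calc -Real.log (1 - Real.exp (-(s * lam k)))
        ≤ Real.exp (-(s * lam k)) * (1 - Real.exp (-(s * lam k)))⁻¹ := by
          rw [t1]; linarith [t2, t3.symm.le, t3.le]
      _ ≤ Real.exp (-(s * lam k)) * (1 - Real.exp (-(s * lam 0)))⁻¹ :=
          mul_le_mul_of_nonneg_left t4 (hx0 k).le
  set l : ℝ := ∑' k, -Real.log (1 - Real.exp (-(s * lam k))) with hldef
  have hl0 : 0 ≤ l := tsum_nonneg hL0
  have hEQcomb := stmt11_main (fun k => Real.exp (-(s * lam k))) hx0 hxlt hLsum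
  -- LHS computation
  have hterm2 : ∀ f : ℕ →₀ ℕ,
      (∏ k ∈ f.support, (ENNReal.ofReal (Real.exp (-(s * lam k)))) ^ f k)
        = ENNReal.ofReal (∏ k ∈ f.support, Real.exp (-(s * lam k)) ^ f k) := by
    intro f
    rw [ENNReal.ofReal_prod_of_nonneg (fun i _ => pow_nonneg (Real.exp_pos _).le _)]
    exact Finset.prod_congr rfl fun k _ => (ENNReal.ofReal_pow (Real.exp_pos _).le _).symm
  have hterm : ∀ f : ℕ →₀ ℕ, Real.exp (-s * (f.sum fun k n => (n : ℝ) * lam k))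
      = ((∏ k ∈ f.support, (ENNReal.ofReal (Real.exp (-(s * lam k)))) ^ f k) : ℝ≥0∞).toReal := by
    intro f
    have e1 : -s * (f.sum fun k n => (n : ℝ) * lam k)
        = ∑ k ∈ f.support, (f k : ℝ) * (-(s * lam k)) := by
      rw [Finsupp.sum, Finset.mul_sum]
      exact Finset.sum_congr rfl fun k _ => by ring
    rw [e1, Real.exp_sum,
      Finset.prod_congr rfl (fun k (_ : k ∈ f.support) => Real.exp_nat_mul (-(s * lam k)) (f k)),
      hterm2 f, ENNReal.toReal_ofReal (Finset.prod_nonneg fun i _ => pow_nonneg (Real.exp_pos _).le _)]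
  have hLHS : (∑' f : ℕ →₀ ℕ, Real.exp (-s * (f.sum fun k n => (n : ℝ) * lam k)))
      = Real.exp l := by
    calc (∑' f : ℕ →₀ ℕ, Real.exp (-s * (f.sum fun k n => (n : ℝ) * lam k)))
        = ∑' f : ℕ →₀ ℕ,
            ((∏ k ∈ f.support, (ENNReal.ofReal (Real.exp (-(s * lam k)))) ^ f k) : ℝ≥0∞).toReal :=
          tsum_congr hterm
      _ = ((∑' f : ℕ →₀ ℕ,
            ∏ k ∈ f.support, (ENNReal.ofReal (Real.exp (-(s * lam k)))) ^ f k) : ℝ≥0∞).toReal :=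
          (ENNReal.tsum_toReal_eq (fun f => by rw [hterm2 f]; exact ENNReal.ofReal_ne_top)).symm
      _ = (ENNReal.ofReal (Real.exp l)).toReal := by rw [hEQcomb]
      _ = Real.exp l := ENNReal.toReal_ofReal (Real.exp_nonneg _)
  -- Integral computation
  have hNfin : ∀ u : ℝ, {k : ℕ | lam k ≤ u}.Finite := by
    intro u
    have h := htop.eventually (eventually_gt_atTop u)
    rw [eventually_atTop] at h
    obtain ⟨K, hK⟩ := h
    apply Set.Finite.subset (Set.finite_Iio K)
    intro k hk
    rw [Set.mem_setOf_eq] at hk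
    rw [Set.mem_Iio]
    by_contra hkK
    push_neg at hkK
    exact absurd hk (not_le.mpr (hK k hkK))
  have hNmono : Monotone N := by
    intro u v huv
    rw [hN u, hN v]
    exact_mod_cast Nat.card_mono (hNfin v) (fun k hk => le_trans hk huv)
  have hNmeas : Measurable N := hNmono.measurable
  have hN0 : ∀ u, 0 ≤ N u := fun u => by rw [hN u]; positivity
  have hdpos : ∀ u : ℝ, 0 < u → 0 < Real.exp (s * u) - 1 := by
    intro u hu
    have : 1 < Real.exp (s * u) := by
      rw [← Real.exp_zero]
      exact Real.exp_lt_exp.mpr (by nlinarith)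
    linarith
  have hptwise : ∀ u ∈ Set.Ioi (0:ℝ),
      ENNReal.ofReal (s * (N u / (Real.exp (s * u) - 1)))
        = ∑' k : ℕ, (Set.Ici (lam k)).indicator
            (fun v => ENNReal.ofReal (s / (Real.exp (s * v) - 1))) u := by
    intro u hu
    rw [Set.mem_Ioi] at hu
    have hind : ∀ k : ℕ, (Set.Ici (lam k)).indicator
        (fun v => ENNReal.ofReal (s / (Real.exp (s * v) - 1))) u
        = Set.indicator {k : ℕ | lam k ≤ u}
            (fun _ => ENNReal.ofReal (s / (Real.exp (s * u) - 1))) k := by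
      intro k
      by_cases h : lam k ≤ u
      · rw [Set.indicator_of_mem (Set.mem_Ici.mpr h) (fun v => ENNReal.ofReal (s / (Real.exp (s * v) - 1))),
          Set.indicator_of_mem (show k ∈ {k : ℕ | lam k ≤ u} from h)]
      · rw [Set.indicator_of_notMem (show u ∉ Set.Ici (lam k) by simpa using h),
          Set.indicator_of_notMem (show k ∉ {k : ℕ | lam k ≤ u} from h)]
    rw [tsum_congr hind, ← tsum_subtype]
    haveI := (hNfin u).fintype
    rw [tsum_fintype, Finset.sum_const, hN u]
    have e : s * ((Nat.card {k : ℕ | lam k ≤ u} : ℝ) / (Real.exp (s * u) - 1))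
        = (Nat.card {k : ℕ | lam k ≤ u} : ℝ) * (s / (Real.exp (s * u) - 1)) := by ring
    rw [e, ENNReal.ofReal_mul (by positivity), ENNReal.ofReal_natCast,
      Nat.card_eq_fintype_card, nsmul_eq_mul, Finset.card_univ]
  have hwmeas : Measurable (fun v => ENNReal.ofReal (s / (Real.exp (s * v) - 1))) := by
    apply ENNReal.measurable_ofReal.comp
    exact Measurable.div measurable_const
      ((Real.measurable_exp.comp (measurable_id'.const_mul s)).sub measurable_const)
  have hJ : (∫⁻ u in Set.Ioi (0:ℝ), ENNReal.ofReal (s * (N u / (Real.exp (s * u) - 1))))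
      = ENNReal.ofReal l := by
    rw [setLIntegral_congr_fun measurableSet_Ioi hptwise]
    rw [lintegral_tsum (fun k => (hwmeas.indicator measurableSet_Ici).aemeasurable)]
    have htermk : ∀ k : ℕ, (∫⁻ u in Set.Ioi (0:ℝ), (Set.Ici (lam k)).indicator
        (fun v => ENNReal.ofReal (s / (Real.exp (s * v) - 1))) u)
        = ENNReal.ofReal (-Real.log (1 - Real.exp (-(s * lam k)))) := by
      intro k
      rw [lintegral_indicator measurableSet_Ici,
        Measure.restrict_restrict measurableSet_Ici,
        Set.inter_eq_left.mpr (show Set.Ici (lam k) ⊆ Set.Ioi 0 from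
          fun v hv => Set.mem_Ioi.mpr (lt_of_lt_of_le (hlampos k) hv)),
        ← restrict_Ioi_eq_restrict_Ici]
      obtain ⟨hint, hval⟩ := stmt11_integral hs (hlampos k)
      rw [← ofReal_integral_eq_lintegral_ofReal hint ?_, hval]
      filter_upwards [ae_restrict_mem measurableSet_Ioi] with v hv
      exact div_nonneg hs.le (hdpos v (lt_trans (hlampos k) hv)).le
    rw [tsum_congr htermk, ← ENNReal.ofReal_tsum_of_nonneg hL0 hLsum]
  have hsI : s * ∫ u in Set.Ioi (0:ℝ), N u / (Real.exp (s * u) - 1) = l := by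
    rw [← integral_const_mul]
    rw [integral_eq_lintegral_of_nonneg_ae ?_ ?_]
    · rw [hJ, ENNReal.toReal_ofReal hl0]
    · filter_upwards [ae_restrict_mem measurableSet_Ioi] with u hu
      exact mul_nonneg hs.le (div_nonneg (hN0 u) (hdpos u hu).le)
    · exact ((measurable_const.mul (hNmeas.div
        ((Real.measurable_exp.comp (measurable_id'.const_mul s)).sub
          measurable_const))).aestronglyMeasurable)
  rw [hsI, hLHS]
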